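/- arXiv:2502.03281 — 7 statements merged into one kernel-verified Lean document; each statement's English description precedes it below -/
import Mathlib

section
/- Suppose the generalized Golub–Kahan recurrences hold with μ = 0 and all coefficients nonzero: γ₁u₁ = b, α₁v₁ = AᵀR⁻¹u₁, and for j < k: γ_{j+1}u_{j+1} = AQv_j − α_j u_j, α_{j+1}v_{j+1} = AᵀR⁻¹u_{j+1} − γ_{j+1}v_j, with α_j ≠ 0 and γ_j ≠ 0 for all j ≤ k. Then span{v₁,…,v_k} = span{w, Mw, …, M^{k−1}w} with M = AᵀR⁻¹AQ and w = AᵀR⁻¹b, and span{u₁,…,u_k} = span{b, Nb, …, N^{k−1}b} with N = AQAᵀR⁻¹; i.e., the genGK vectors span the generalized Krylov subspaces 𝒦_k(AᵀR⁻¹AQ, AᵀR⁻¹b) and 𝒦_k(AQAᵀR⁻¹, b). -/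
/-!
With `B = AᵀR⁻¹` and `C = AQ`, the recurrences say that `B u_j ≡ a_j v_j` modulo
`span{v_1, …, v_{j-1}}` and `C v_j ≡ c_{j+1} u_{j+1}` modulo `span{u_1, …, u_j}`. Composing
the two, `CB u_j ≡ a_j c_{j+1} u_{j+1}` modulo `span{u_1, …, u_j}` and
`BC v_j ≡ a_{j+1} c_{j+1} v_{j+1}` modulo `span{v_1, …, v_j}`: both sequences are in
Hessenberg form with nonzero subdiagonal, so each prefix spans the Krylov space of its first
vector, as in the Lanczos process. Finally `b = c_1 u_1` and `AᵀR⁻¹ b = c_1 a_1 v_1`.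
-/

open Matrix Submodule Set

section Krylov

variable {K E F : Type*} [Field K] [AddCommGroup E] [Module K E] [AddCommGroup F] [Module K F]

theorem span_range_fin_succ (x : ℕ → E) (j : ℕ) :
    span K (range fun i : Fin (j + 1) => x i) =
      span K (range fun i : Fin j => x i) ⊔ K ∙ x j := by
  rw [sup_comm, ← span_insert]
  congr 1
  ext z
  simp [Fin.exists_fin_succ', or_comm, eq_comm]

theorem span_range_fin_mono (x : ℕ → E) {i j : ℕ} (hij : i ≤ j) :
    span K (range fun l : Fin i => x l) ≤ span K (range fun l : Fin j => x l) :=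
  span_mono <| range_subset_iff.2 fun l => ⟨Fin.castLE hij l, rfl⟩

theorem mem_span_range_fin (x : ℕ → E) {i j : ℕ} (hij : i < j) :
    x i ∈ span K (range fun l : Fin j => x l) :=
  subset_span ⟨⟨i, hij⟩, rfl⟩

theorem map_span_range_fin_le (f : E →ₗ[K] F) (x : ℕ → E) (S : Submodule K F) {j : ℕ}
    (h : ∀ i < j, f (x i) ∈ S) : (span K (range fun i : Fin j => x i)).map f ≤ S :=
  (map_span_le _ _ _).2 <| forall_mem_range.2 fun i => h i i.isLt

theorem map_span_range_fin_le_of_sub_smul_mem (f : E →ₗ[K] F) (x : ℕ → E) (y : ℕ → F)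
    (β : ℕ → K) (d : ℕ) {j : ℕ}
    (h : ∀ i < j, f (x i) - β i • y (i + d) ∈ span K (range fun l : Fin (i + d) => y l)) :
    (span K (range fun i : Fin j => x i)).map f ≤ span K (range fun l : Fin (j + d) => y l) :=
  map_span_range_fin_le f x _ fun i hi => by
    rw [← sub_add_cancel (f (x i)) (β i • y (i + d))]
    exact add_mem (span_range_fin_mono y (by omega) (h i hi))
      (smul_mem _ _ (mem_span_range_fin y (by omega)))

def krylovSubspace (T : Module.End K E) (g : E) (k : ℕ) : Submodule K E :=
  span K (range fun i : Fin k => (T ^ (i : ℕ)) g)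

theorem krylovSubspace_zero (T : Module.End K E) (g : E) : krylovSubspace T g 0 = ⊥ := by
  simp [krylovSubspace]

theorem krylovSubspace_succ (T : Module.End K E) (g : E) (j : ℕ) :
    krylovSubspace T g (j + 1) = krylovSubspace T g j ⊔ K ∙ (T ^ j) g :=
  span_range_fin_succ (fun i => (T ^ i) g) j

theorem krylovSubspace_mono (T : Module.End K E) (g : E) {i j : ℕ} (hij : i ≤ j) :
    krylovSubspace T g i ≤ krylovSubspace T g j :=
  span_range_fin_mono (fun l => (T ^ l) g) hij

theorem pow_apply_mem_krylovSubspace (T : Module.End K E) (g : E) {i k : ℕ} (hik : i < k) :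
    (T ^ i) g ∈ krylovSubspace T g k :=
  mem_span_range_fin (fun i => (T ^ i) g) hik

theorem map_krylovSubspace_le (T : Module.End K E) (g : E) (j : ℕ) :
    (krylovSubspace T g j).map T ≤ krylovSubspace T g (j + 1) :=
  map_span_range_fin_le T (fun i => (T ^ i) g) _ fun i hi => by
    rw [← Module.End.mul_apply, ← pow_succ']
    exact pow_apply_mem_krylovSubspace T g (Nat.succ_lt_succ hi)

theorem krylovSubspace_smul (T : Module.End K E) (g : E) (k : ℕ) {s : K} (hs : s ≠ 0) :
    krylovSubspace T (s • g) k = krylovSubspace T g k := by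
  simp only [krylovSubspace, map_smul, range_smul]
  exact span_smul_eq_of_isUnit _ _ hs.isUnit

theorem krylovSubspace_mulVecLin {ι : Type*} [Fintype ι] [DecidableEq ι] (M : Matrix ι ι K)
    (g : ι → K) (k : ℕ) :
    krylovSubspace M.mulVecLin g k = span K (range fun i : Fin k => (M ^ (i : ℕ)) *ᵥ g) := by
  have hpow : ∀ i : ℕ, (M.mulVecLin ^ i) g = (M ^ i) *ᵥ g := by
    intro i
    induction i with
    | zero => simp
    | succ i ih => rw [pow_succ', Module.End.mul_apply, ih, pow_succ', mulVecLin_apply,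
        mulVec_mulVec]
  simp only [krylovSubspace, hpow]

theorem span_range_fin_eq_krylovSubspace (T : Module.End K E) (x : ℕ → E) (β : ℕ → K) {k : ℕ}
    (hβ : ∀ i, i + 1 < k → β i ≠ 0)
    (hT : ∀ i, i + 1 < k →
      T (x i) - β i • x (i + 1) ∈ span K (range fun l : Fin (i + 1) => x l)) :
    span K (range fun i : Fin k => x i) = krylovSubspace T (x 0) k := by
  suffices ∀ j ≤ k, span K (range fun i : Fin j => x i) = krylovSubspace T (x 0) j from
    this k le_rfl
  intro j
  induction j with
  | zero => intro; simp [krylovSubspace_zero]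
  | succ j ih =>
    intro hj
    have hPK := ih (by omega)
    have hx : x j ∈ krylovSubspace T (x 0) (j + 1) := by
      rcases j with _ | i
      · simpa using pow_apply_mem_krylovSubspace T (x 0) zero_lt_one
      rw [← inv_smul_smul₀ (hβ i hj) (x (i + 1)),
        ← sub_sub_cancel (T (x i)) (β i • x (i + 1))]
      refine smul_mem _ _ (sub_mem (map_krylovSubspace_le T _ _ ⟨x i, ?_, rfl⟩) ?_)
      · exact hPK.le (mem_span_range_fin x (by omega))
      · exact krylovSubspace_mono T (x 0) (Nat.le_succ _) (hPK.le (hT i hj))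
    have hg : (T ^ j) (x 0) ∈ span K (range fun i : Fin (j + 1) => x i) := by
      rcases j with _ | i
      · simp
      rw [pow_succ', Module.End.mul_apply]
      exact map_span_range_fin_le_of_sub_smul_mem T x x β 1 (fun l hl => hT l (by omega))
        ⟨_, hPK.ge (pow_apply_mem_krylovSubspace T (x 0) (by omega)), rfl⟩
    apply le_antisymm
    · rw [span_range_fin_succ, hPK]
      exact sup_le (krylovSubspace_mono T (x 0) (Nat.le_succ j))
        ((span_singleton_le_iff_mem _ _).2 hx)
    · rw [krylovSubspace_succ, ← hPK]
      exact sup_le (span_range_fin_mono x (Nat.le_succ j))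
        ((span_singleton_le_iff_mem _ _).2 hg)

section Bidiagonal

variable {B : E →ₗ[K] F} {C : F →ₗ[K] E} {x : ℕ → E} {y : ℕ → F} {α γ : ℕ → K} {k : ℕ}

theorem comp_apply_sub_smul_mem_span_left
    (hB : ∀ i < k, B (x i) - α i • y i ∈ span K (range fun l : Fin i => y l))
    (hC : ∀ i, i + 1 < k →
      C (y i) - γ i • x (i + 1) ∈ span K (range fun l : Fin (i + 1) => x l))
    {i : ℕ} (hi : i + 1 < k) :
    (C ∘ₗ B) (x i) - (γ i * α i) • x (i + 1) ∈
      span K (range fun l : Fin (i + 1) => x l) := by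
  have hCy : C (B (x i) - α i • y i) ∈ span K (range fun l : Fin (i + 1) => x l) :=
    map_span_range_fin_le_of_sub_smul_mem C y x γ 1 (fun l hl => hC l (by omega))
      ⟨_, hB i (by omega), rfl⟩
  convert add_mem hCy (smul_mem _ (α i) (hC i hi)) using 1
  simp only [LinearMap.comp_apply, map_sub, map_smul, smul_sub, mul_comm (γ i), mul_smul]
  abel

theorem comp_apply_sub_smul_mem_span_right
    (hB : ∀ i < k, B (x i) - α i • y i ∈ span K (range fun l : Fin i => y l))
    (hC : ∀ i, i + 1 < k →
      C (y i) - γ i • x (i + 1) ∈ span K (range fun l : Fin (i + 1) => x l))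
    {i : ℕ} (hi : i + 1 < k) :
    (B ∘ₗ C) (y i) - (α (i + 1) * γ i) • y (i + 1) ∈
      span K (range fun l : Fin (i + 1) => y l) := by
  have hBx : B (C (y i) - γ i • x (i + 1)) ∈ span K (range fun l : Fin (i + 1) => y l) :=
    map_span_range_fin_le_of_sub_smul_mem B x y α 0 (fun l hl => hB l (by omega))
      ⟨_, hC i hi, rfl⟩
  convert add_mem hBx (smul_mem _ (γ i) (hB (i + 1) hi)) using 1
  simp only [LinearMap.comp_apply, map_sub, map_smul, smul_sub, mul_comm (α (i + 1)),
    mul_smul]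
  abel

end Bidiagonal

theorem span_eq_krylovSubspace_of_golubKahan (B : E →ₗ[K] F) (C : F →ₗ[K] E) {k : ℕ}
    (hk : 1 ≤ k) (b : E) (u : ℕ → E) (v : ℕ → F) (a c : ℕ → K)
    (hinit_u : c 1 • u 1 = b) (hinit_v : a 1 • v 1 = B (u 1))
    (hrec_u : ∀ j, 1 ≤ j → j < k → c (j + 1) • u (j + 1) = C (v j) - a j • u j)
    (hrec_v : ∀ j, 1 ≤ j → j < k →
      a (j + 1) • v (j + 1) = B (u (j + 1)) - c (j + 1) • v j)
    (ha : ∀ j, 1 ≤ j → j ≤ k → a j ≠ 0) (hc : ∀ j, 1 ≤ j → j ≤ k → c j ≠ 0) :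
    span K (range fun j : Fin k => v ((j : ℕ) + 1)) = krylovSubspace (B ∘ₗ C) (B b) k ∧
      span K (range fun j : Fin k => u ((j : ℕ) + 1)) = krylovSubspace (C ∘ₗ B) b k := by
  have hB : ∀ i < k, B (u (i + 1)) - a (i + 1) • v (i + 1) ∈
      span K (range fun l : Fin i => v ((l : ℕ) + 1)) := by
    rintro (_ | i) hi
    · rw [hinit_v, sub_self]
      exact zero_mem _
    · rw [hrec_v (i + 1) (by omega) hi, sub_sub_cancel]
      exact smul_mem _ _ (mem_span_range_fin (fun l => v (l + 1)) (Nat.lt_succ_self i))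
  have hC : ∀ i, i + 1 < k → C (v (i + 1)) - c (i + 2) • u (i + 2) ∈
      span K (range fun l : Fin (i + 1) => u ((l : ℕ) + 1)) := by
    intro i hi
    rw [hrec_u (i + 1) (by omega) hi, sub_sub_cancel]
    exact smul_mem _ _ (mem_span_range_fin (fun l => u (l + 1)) (Nat.lt_succ_self i))
  have hBb : B b = (c 1 * a 1) • v 1 := by rw [← hinit_u, map_smul, ← hinit_v, smul_smul]
  constructor
  · rw [hBb, krylovSubspace_smul _ _ _ (mul_ne_zero (hc 1 le_rfl hk) (ha 1 le_rfl hk))]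
    exact span_range_fin_eq_krylovSubspace (B ∘ₗ C) (fun i => v (i + 1))
      (fun i => a (i + 2) * c (i + 2))
      (fun i hi => mul_ne_zero (ha (i + 2) (by omega) hi) (hc (i + 2) (by omega) hi))
      (fun i hi => comp_apply_sub_smul_mem_span_right (x := fun i => u (i + 1))
        (y := fun i => v (i + 1)) (α := fun i => a (i + 1)) (γ := fun i => c (i + 2)) hB hC hi)
  · rw [← hinit_u, krylovSubspace_smul _ _ _ (hc 1 le_rfl hk)]
    exact span_range_fin_eq_krylovSubspace (C ∘ₗ B) (fun i => u (i + 1))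
      (fun i => c (i + 2) * a (i + 1))
      (fun i hi => mul_ne_zero (hc (i + 2) (by omega) hi)
        (ha (i + 1) (by omega) (by omega)))
      (fun i hi => comp_apply_sub_smul_mem_span_left (x := fun i => u (i + 1))
        (y := fun i => v (i + 1)) (α := fun i => a (i + 1)) (γ := fun i => c (i + 2)) hB hC hi)

end Krylov

theorem genGK_krylov_spans_general
    {m n k : ℕ} (hk : 1 ≤ k)
    (A : Matrix (Fin m) (Fin n) ℝ) (R : Matrix (Fin m) (Fin m) ℝ)
    (Q : Matrix (Fin n) (Fin n) ℝ)
    (b : Fin m → ℝ)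
    (u : ℕ → (Fin m → ℝ)) (v : ℕ → (Fin n → ℝ)) (a c : ℕ → ℝ)
    (hinit_u : c 1 • u 1 = b)
    (hinit_v : a 1 • v 1 = Aᵀ *ᵥ (R⁻¹ *ᵥ u 1))
    (hrec_u : ∀ j, 1 ≤ j → j < k →
      c (j + 1) • u (j + 1) = A *ᵥ (Q *ᵥ v j) - a j • u j)
    (hrec_v : ∀ j, 1 ≤ j → j < k →
      a (j + 1) • v (j + 1) = Aᵀ *ᵥ (R⁻¹ *ᵥ u (j + 1)) - c (j + 1) • v j)
    (ha : ∀ j, 1 ≤ j → j ≤ k → a j ≠ 0)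
    (hc : ∀ j, 1 ≤ j → j ≤ k → c j ≠ 0) :
    Submodule.span ℝ (Set.range fun j : Fin k => v ((j : ℕ) + 1))
      = Submodule.span ℝ (Set.range fun i : Fin k =>
          ((Aᵀ * R⁻¹ * A * Q) ^ (i : ℕ)) *ᵥ (Aᵀ *ᵥ (R⁻¹ *ᵥ b))) ∧
    Submodule.span ℝ (Set.range fun j : Fin k => u ((j : ℕ) + 1))
      = Submodule.span ℝ (Set.range fun i : Fin k =>
          ((A * Q * Aᵀ * R⁻¹) ^ (i : ℕ)) *ᵥ b) := by
  obtain ⟨hv, hu⟩ := span_eq_krylovSubspace_of_golubKahan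
    (Aᵀ.mulVecLin ∘ₗ R⁻¹.mulVecLin) (A.mulVecLin ∘ₗ Q.mulVecLin)
    hk b u v a c hinit_u hinit_v hrec_u hrec_v ha hc
  rw [hv, hu, ← krylovSubspace_mulVecLin, ← krylovSubspace_mulVecLin]
  simp only [mulVecLin_mul]
  exact ⟨rfl, rfl⟩

/-- with μ = 0 and all genGK coefficients nonzero, the genGK vectors
span the generalized Krylov subspaces:
span{v₁,…,v_k} = 𝒦_k(AᵀR⁻¹AQ, AᵀR⁻¹b) and span{u₁,…,u_k} = 𝒦_k(AQAᵀR⁻¹, b).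
(Sequences are 1-based: `u j` is u_j for 1 ≤ j ≤ k.) -/
theorem genGK_krylov_spans
    {m n k : ℕ} (hk : 1 ≤ k)
    (A : Matrix (Fin m) (Fin n) ℝ) (R : Matrix (Fin m) (Fin m) ℝ)
    (Q : Matrix (Fin n) (Fin n) ℝ) (hR : R.PosDef) (hQ : Q.PosDef)
    (b : Fin m → ℝ)
    (u : ℕ → (Fin m → ℝ)) (v : ℕ → (Fin n → ℝ)) (a c : ℕ → ℝ)
    (hinit_u : c 1 • u 1 = b)
    (hinit_v : a 1 • v 1 = Aᵀ *ᵥ (R⁻¹ *ᵥ u 1))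
    (hrec_u : ∀ j, 1 ≤ j → j < k →
      c (j + 1) • u (j + 1) = A *ᵥ (Q *ᵥ v j) - a j • u j)
    (hrec_v : ∀ j, 1 ≤ j → j < k →
      a (j + 1) • v (j + 1) = Aᵀ *ᵥ (R⁻¹ *ᵥ u (j + 1)) - c (j + 1) • v j)
    (ha : ∀ j, 1 ≤ j → j ≤ k → a j ≠ 0)
    (hc : ∀ j, 1 ≤ j → j ≤ k → c j ≠ 0) :
    Submodule.span ℝ (Set.range fun j : Fin k => v ((j : ℕ) + 1))
      = Submodule.span ℝ (Set.range fun i : Fin k =>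
          ((Aᵀ * R⁻¹ * A * Q) ^ (i : ℕ)) *ᵥ (Aᵀ *ᵥ (R⁻¹ *ᵥ b))) ∧
    Submodule.span ℝ (Set.range fun j : Fin k => u ((j : ℕ) + 1))
      = Submodule.span ℝ (Set.range fun i : Fin k =>
          ((A * Q * Aᵀ * R⁻¹) ^ (i : ℕ)) *ᵥ b) :=
  genGK_krylov_spans_general hk A R Q b u v a c hinit_u hinit_v hrec_u hrec_v ha hc
end

section
/- Let Z ∈ ℝ^{n×k} with ZᵀZ = I_k, let Θ ∈ ℝ^{k×k} be diagonal with nonnegative diagonal entries, let c > 0, and set D = I_k − (c Θ + I_k)^{−1/2}, where (cΘ + I_k)^{−1/2} is the diagonal matrix with entries (cθ_i + 1)^{−1/2}. Then (I_n − Z D Zᵀ)(I_n − Z D Zᵀ) = (I_n + c Z Θ Zᵀ)⁻¹; i.e., I_n − ZDZᵀ is a symmetric square root of the inverse of I_n + cZΘZᵀ. -/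
/-! Since `ZᵀZ = 1`, the map `A ↦ 1 + Z (A - 1) Zᵀ` is multiplicative. It sends
`E = (cΘ + 1)^{-1/2}` to `1 - ZDZᵀ` and `F = cΘ + 1` to `1 + cZΘZᵀ`, and `E E F = 1`. -/

open Matrix

/-- `1 + Z * (A - 1) * Y` acts as `A` on the range of the idempotent `Z * Y` and as the identity
on its kernel. -/
theorem Matrix.one_add_mul_sub_one_mul_mul {R m k : Type*} [Ring R] [Fintype m] [Fintype k]
    [DecidableEq m] [DecidableEq k] {Z : Matrix m k R} {Y : Matrix k m R} (hYZ : Y * Z = 1)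
    (A B : Matrix k k R) :
    (1 + Z * (A - 1) * Y) * (1 + Z * (B - 1) * Y) = 1 + Z * (A * B - 1) * Y := by
  have hcross : Z * (A - 1) * Y * (Z * (B - 1) * Y) = Z * ((A - 1) * (B - 1)) * Y := by
    simp only [Matrix.mul_assoc]
    rw [← Matrix.mul_assoc Y Z, hYZ, Matrix.one_mul]
  have hsum : (A - 1) + (B - 1) + (A - 1) * (B - 1) = A * B - 1 := by noncomm_ring
  rw [Matrix.add_mul, Matrix.mul_add, Matrix.mul_add, hcross, ← hsum]
  simp only [Matrix.add_mul, Matrix.mul_add, Matrix.one_mul, Matrix.mul_one]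
  abel

theorem low_rank_inverse_sqrt_general
    {n k : ℕ}
    (Z : Matrix (Fin n) (Fin k) ℝ) (hZ : Zᵀ * Z = 1)
    (θ : Fin k → ℝ) (hθ : ∀ i, 0 ≤ θ i)
    (c : ℝ) (hc : 0 < c)
    (D : Matrix (Fin k) (Fin k) ℝ)
    (hD : D = 1 - Matrix.diagonal (fun i => (Real.sqrt (c * θ i + 1))⁻¹)) :
    (1 - Z * D * Zᵀ) * (1 - Z * D * Zᵀ)
      = (1 + c • (Z * Matrix.diagonal θ * Zᵀ))⁻¹ := by
  set E := Matrix.diagonal (fun i => (Real.sqrt (c * θ i + 1))⁻¹)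
  set F := Matrix.diagonal (fun i => c * θ i + 1)
  have hpos : ∀ i, 0 < c * θ i + 1 := fun i => by nlinarith [hθ i]
  have hEEF : E * E * F = 1 := by
    rw [Matrix.diagonal_mul_diagonal, Matrix.diagonal_mul_diagonal, ← Matrix.diagonal_one]
    congr 1
    funext i
    rw [← mul_inv, Real.mul_self_sqrt (hpos i).le, inv_mul_cancel₀ (hpos i).ne']
  have hsqrt : 1 - Z * D * Zᵀ = 1 + Z * (E - 1) * Zᵀ := by
    rw [hD, ← neg_sub E 1, Matrix.mul_neg, Matrix.neg_mul, sub_neg_eq_add]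
  have hA : 1 + c • (Z * Matrix.diagonal θ * Zᵀ) = 1 + Z * (F - 1) * Zᵀ := by
    have hF : F - 1 = c • Matrix.diagonal θ := by
      rw [← Matrix.diagonal_one, Matrix.diagonal_sub, ← Matrix.diagonal_smul]
      congr 1
      funext i
      simp
    rw [hF, Matrix.mul_smul, Matrix.smul_mul]
  rw [hsqrt, hA, eq_comm]
  refine Matrix.inv_eq_left_inv ?_
  rw [one_add_mul_sub_one_mul_mul hZ, one_add_mul_sub_one_mul_mul hZ, hEEF, sub_self,
    Matrix.mul_zero, Matrix.zero_mul, add_zero]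

/-- with ZᵀZ = I_k, Θ = diag(θ) with θᵢ ≥ 0, c > 0 and
D = I_k − (cΘ + I_k)^{−1/2} (diagonal with entries 1 − (cθᵢ+1)^{−1/2}),
the matrix I_n − ZDZᵀ is a symmetric square root of (I_n + cZΘZᵀ)⁻¹:
(I_n − ZDZᵀ)(I_n − ZDZᵀ) = (I_n + cZΘZᵀ)⁻¹. -/
theorem low_rank_inverse_sqrt
    {n k : ℕ} (hk1 : 1 ≤ k) (hkn : k ≤ n)
    (Z : Matrix (Fin n) (Fin k) ℝ) (hZ : Zᵀ * Z = 1)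
    (θ : Fin k → ℝ) (hθ : ∀ i, 0 ≤ θ i)
    (c : ℝ) (hc : 0 < c)
    (D : Matrix (Fin k) (Fin k) ℝ)
    (hD : D = 1 - Matrix.diagonal (fun i => (Real.sqrt (c * θ i + 1))⁻¹)) :
    (1 - Z * D * Zᵀ) * (1 - Z * D * Zᵀ)
      = (1 + c • (Z * Matrix.diagonal θ * Zᵀ))⁻¹ :=
  low_rank_inverse_sqrt_general Z hZ θ hθ c hc D hD
end

section
/- Let V ∈ ℝ^{n×k}, B ∈ ℝ^{(k+1)×k}, and suppose Z ∈ ℝ^{n×k} with ZᵀZ = I_k and diagonal Θ ⪰ 0 satisfy Z Θ Zᵀ = Q^{1/2} V BᵀB Vᵀ Q^{1/2}. With D = I_k − ((λ/δ)Θ + I_k)^{−1/2} and M = δ^{−1/2} Q^{1/2}(I_n − Z D Zᵀ), one has M Mᵀ = (λ V BᵀB Vᵀ + δ Q⁻¹)⁻¹; i.e., M is an exact square-root factor of the genGK approximate conditional covariance Γ̂ = (λVBᵀBVᵀ + δQ⁻¹)⁻¹. -/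
open Matrix

/-- if ZΘZᵀ = Q^{1/2}VBᵀBVᵀQ^{1/2} with ZᵀZ = I_k and Θ = diag(θ) ⪰ 0,
then M = δ^{−1/2}Q^{1/2}(I − ZDZᵀ), with D = I_k − ((λ/δ)Θ + I_k)^{−1/2}, is an exact
square-root factor of the genGK approximate conditional covariance:
MMᵀ = (λVBᵀBVᵀ + δQ⁻¹)⁻¹. -/
theorem genGK_cov_sqrt_factor
    {n k : ℕ} (hk1 : 1 ≤ k) (hkn : k ≤ n)
    (Q : Matrix (Fin n) (Fin n) ℝ) (hQ : Q.PosDef)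
    (S : Matrix (Fin n) (Fin n) ℝ) (hS : S.PosDef) (hSQ : S * S = Q)
    (lam del : ℝ) (hlam : 0 < lam) (hdel : 0 < del)
    (V : Matrix (Fin n) (Fin k) ℝ) (B : Matrix (Fin (k + 1)) (Fin k) ℝ)
    (Z : Matrix (Fin n) (Fin k) ℝ) (hZ : Zᵀ * Z = 1)
    (θ : Fin k → ℝ) (hθ : ∀ i, 0 ≤ θ i)
    (hZΘ : Z * Matrix.diagonal θ * Zᵀ = S * (V * (Bᵀ * B) * Vᵀ) * S)
    (D : Matrix (Fin k) (Fin k) ℝ)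
    (hD : D = 1 - Matrix.diagonal (fun i => (Real.sqrt (lam / del * θ i + 1))⁻¹))
    (M : Matrix (Fin n) (Fin n) ℝ)
    (hM : M = (Real.sqrt del)⁻¹ • (S * (1 - Z * D * Zᵀ))) :
    M * Mᵀ = (lam • (V * (Bᵀ * B) * Vᵀ) + del • Q⁻¹)⁻¹ := by
  have hSdet : IsUnit S.det := isUnit_iff_ne_zero.mpr hS.det_pos.ne'
  have hSS : S * S⁻¹ = 1 := Matrix.mul_nonsing_inv S hSdet
  have hSS' : S⁻¹ * S = 1 := Matrix.nonsing_inv_mul S hSdet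
  have hSt : Sᵀ = S := by
    have h := hS.1.eq
    simpa [Matrix.conjTranspose_eq_transpose_of_trivial] using h
  -- positivity of the diagonal entries
  have he : ∀ i, 0 < lam / del * θ i + 1 := by
    intro i
    have h1 := hθ i
    positivity
  -- helper: equal diagonal functions give equal diagonal matrices
  have hdiag : ∀ (a b : Fin k → ℝ), (∀ i, a i = b i) → Matrix.diagonal a = Matrix.diagonal b :=
    fun a b h => by rw [funext h]
  -- D is symmetric
  have hDt : Dᵀ = D := by
    rw [hD]; simp [transpose_sub, Matrix.diagonal_transpose]
  -- abbreviations
  set W : Matrix (Fin n) (Fin n) ℝ := Z * Matrix.diagonal θ * Zᵀ with hW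
  set f : Fin k → ℝ := fun i => 1 - (lam / del * θ i + 1)⁻¹ with hf
  set P : Matrix (Fin n) (Fin n) ℝ := 1 - Z * Matrix.diagonal f * Zᵀ with hP
  -- Q⁻¹ = S⁻¹ * S⁻¹
  have hQinv : Q⁻¹ = S⁻¹ * S⁻¹ := by rw [← hSQ, Matrix.mul_inv_rev]
  -- A = S⁻¹ W S⁻¹
  have hAeq : V * (Bᵀ * B) * Vᵀ = S⁻¹ * W * S⁻¹ := by
    rw [hZΘ]
    simp only [← Matrix.mul_assoc]
    rw [hSS', Matrix.one_mul, Matrix.mul_assoc _ S S⁻¹, hSS, Matrix.mul_one]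
  -- collapsing middle Z factors
  have hmid : ∀ (G H : Matrix (Fin k) (Fin k) ℝ),
      (Z * G * Zᵀ) * (Z * H * Zᵀ) = Z * (G * H) * Zᵀ := by
    intro G H
    have h1 : Zᵀ * (Z * (H * Zᵀ)) = H * Zᵀ := by
      rw [← Matrix.mul_assoc, hZ, Matrix.one_mul]
    simp only [Matrix.mul_assoc]
    rw [h1]
  -- (1 - ZDZᵀ)² = P
  have hsq : (1 - Z * D * Zᵀ) * (1 - Z * D * Zᵀ) = P := by
    have hDDf : D + D - D * D = Matrix.diagonal f := by
      rw [hD, ← Matrix.diagonal_one]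
      simp only [Matrix.diagonal_sub, Matrix.diagonal_add, Matrix.diagonal_mul_diagonal]
      apply hdiag
      intro i
      have hs : Real.sqrt (lam / del * θ i + 1) * Real.sqrt (lam / del * θ i + 1)
          = lam / del * θ i + 1 := Real.mul_self_sqrt (he i).le
      have htt : (Real.sqrt (lam / del * θ i + 1))⁻¹ * (Real.sqrt (lam / del * θ i + 1))⁻¹
          = (lam / del * θ i + 1)⁻¹ := by rw [← mul_inv, hs]
      simp only [hf]
      linear_combination -htt
    rw [hP, ← hDDf]
    simp only [Matrix.mul_sub, Matrix.sub_mul, Matrix.mul_one, Matrix.one_mul,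
      Matrix.mul_add, Matrix.add_mul, hmid]
    abel
  -- core diagonal identity
  have hPW : P * (lam • W + del • (1 : Matrix (Fin n) (Fin n) ℝ)) = del • 1 := by
    have hfw : (Z * Matrix.diagonal f * Zᵀ) * W
        = Z * Matrix.diagonal (fun i => f i * θ i) * Zᵀ := by
      rw [hW, hmid, Matrix.diagonal_mul_diagonal]
    have hdz : lam • W - (lam • (Z * Matrix.diagonal (fun i => f i * θ i) * Zᵀ)
        + del • (Z * Matrix.diagonal f * Zᵀ)) = 0 := by
      rw [hW, ← Matrix.smul_mul, ← Matrix.mul_smul, ← Matrix.smul_mul, ← Matrix.mul_smul,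
        ← Matrix.smul_mul, ← Matrix.mul_smul, ← Matrix.add_mul, ← Matrix.mul_add,
        ← Matrix.sub_mul, ← Matrix.mul_sub]
      have hz : lam • Matrix.diagonal θ - (lam • Matrix.diagonal (fun i => f i * θ i)
          + del • Matrix.diagonal f) = 0 := by
        rw [← Matrix.diagonal_smul lam θ, ← Matrix.diagonal_smul lam,
          ← Matrix.diagonal_smul del, Matrix.diagonal_add, Matrix.diagonal_sub,
          ← Matrix.diagonal_zero]
        apply hdiag
        intro i
        have hei := (he i).ne'
        have hne : lam * θ i + del ≠ 0 := by
          have h1 : 0 ≤ lam * θ i := mul_nonneg hlam.le (hθ i)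
          linarith
        simp only [hf, Pi.smul_apply, smul_eq_mul, Pi.zero_apply]
        field_simp
        ring
      rw [hz, Matrix.mul_zero, Matrix.zero_mul]
    rw [hP, Matrix.sub_mul, Matrix.one_mul, Matrix.mul_add, Matrix.mul_smul, hfw,
      Matrix.mul_smul, Matrix.mul_one]
    rw [sub_eq_zero.mp hdz]
    abel
  -- M Mᵀ = del⁻¹ • (S * P * S)
  have hMM : M * Mᵀ = del⁻¹ • (S * P * S) := by
    rw [hM]
    rw [Matrix.transpose_smul, Matrix.transpose_mul, hSt]
    have hPt : (1 - Z * D * Zᵀ)ᵀ = 1 - Z * D * Zᵀ := by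
      rw [Matrix.transpose_sub, Matrix.transpose_one, Matrix.transpose_mul,
        Matrix.transpose_mul, Matrix.transpose_transpose, hDt, Matrix.mul_assoc]
    rw [hPt]
    rw [Matrix.smul_mul, Matrix.mul_smul, smul_smul]
    have hc : (Real.sqrt del)⁻¹ * (Real.sqrt del)⁻¹ = del⁻¹ := by
      rw [← mul_inv, Real.mul_self_sqrt hdel.le]
    rw [hc]
    congr 1
    rw [Matrix.mul_assoc, ← Matrix.mul_assoc (1 - Z * D * Zᵀ), hsq, ← Matrix.mul_assoc]
  -- the target matrix in factored form
  have hX : lam • (V * (Bᵀ * B) * Vᵀ) + del • Q⁻¹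
      = S⁻¹ * (lam • W + del • (1 : Matrix (Fin n) (Fin n) ℝ)) * S⁻¹ := by
    rw [hAeq, hQinv, Matrix.mul_add, Matrix.add_mul]
    rw [Matrix.mul_smul, Matrix.smul_mul, Matrix.mul_smul, Matrix.smul_mul, Matrix.mul_one]
  -- left-inverse computation
  have hleft : (M * Mᵀ) * (lam • (V * (Bᵀ * B) * Vᵀ) + del • Q⁻¹) = 1 := by
    rw [hMM, hX, Matrix.smul_mul]
    have hcanc : ∀ X : Matrix (Fin n) (Fin n) ℝ, S * (S⁻¹ * X) = X := by
      intro X; rw [← Matrix.mul_assoc, hSS, Matrix.one_mul]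
    have hkey : S * P * S * (S⁻¹ * (lam • W + del • 1) * S⁻¹)
        = S * (P * ((lam • W + del • 1) * S⁻¹)) := by
      simp only [Matrix.mul_assoc]
      rw [hcanc]
    rw [hkey, ← Matrix.mul_assoc P, hPW, Matrix.smul_mul, Matrix.one_mul,
      Matrix.mul_smul, hSS, smul_smul, inv_mul_cancel₀ hdel.ne', one_smul]
  exact (Matrix.inv_eq_left_inv hleft).symm
end

section
/- Let V ∈ ℝ^{n×k} with VᵀQV = I_k, Z ∈ ℝ^{n×k} with ZᵀZ = I_k, D ∈ ℝ^{k×k} diagonal, z, ξ vectors with x = Q V z + δ^{−1/2} Q^{1/2}(I_n − Z D Zᵀ)ξ. Then the prior norm of x can be evaluated without applying Q⁻¹: xᵀ Q⁻¹ x = zᵀz + 2 δ^{−1/2} zᵀ Vᵀ Q^{1/2}(I_n − Z D Zᵀ)ξ + δ⁻¹ ξᵀ(I_n + Z(D² − 2D)Zᵀ)ξ. -/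
open Matrix

/-!
Write `Q = S S` and `x = S y` with `y = S V z + δ^{-1/2} M ξ`, `M = I - Z D Zᵀ`. Then
`xᵀ Q⁻¹ x = yᵀ y`, and expanding the square gives the three terms: `|S V z|² = zᵀ Vᵀ Q V z = zᵀ z`,
the cross term, and `|M ξ|² = ξᵀ Mᵀ M ξ`, where `Mᵀ M = I + Z (D² - 2D) Zᵀ` because `Zᵀ Z = I`.
-/

section

variable {R : Type*} [CommRing R] {l m n : Type*} [Fintype l] [Fintype m] [Fintype n]

lemma mulVec_dotProduct_mulVec (A : Matrix n m R) (B : Matrix n l R) (u : m → R) (v : l → R) :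
    (A *ᵥ u) ⬝ᵥ (B *ᵥ v) = u ⬝ᵥ ((Aᵀ * B) *ᵥ v) := by
  rw [← mulVec_mulVec, ← vecMul_transpose, ← dotProduct_mulVec]

lemma add_smul_dotProduct_add_smul_self (a b : n → R) (c : R) :
    (a + c • b) ⬝ᵥ (a + c • b) = a ⬝ᵥ a + 2 * c * (a ⬝ᵥ b) + c * c * (b ⬝ᵥ b) := by
  simp only [add_dotProduct, dotProduct_add, smul_dotProduct, dotProduct_smul, smul_eq_mul,
    dotProduct_comm b a]
  ring

lemma mulVec_dotProduct_inv_mul_transpose_mulVec [DecidableEq n] (S : Matrix n n R)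
    (hS : IsUnit S) (y : n → R) :
    (S *ᵥ y) ⬝ᵥ ((S * Sᵀ)⁻¹ *ᵥ (S *ᵥ y)) = y ⬝ᵥ y := by
  rw [isUnit_iff_isUnit_det] at hS
  have hSt : IsUnit Sᵀ.det := by rwa [det_transpose]
  rw [mulVec_dotProduct_mulVec, Matrix.mul_inv_rev, ← Matrix.mul_assoc, mul_nonsing_inv _ hSt,
    Matrix.one_mul, mulVec_mulVec, nonsing_inv_mul _ hS, one_mulVec]

lemma transpose_mul_self_one_sub_mul_mul_transpose [DecidableEq m] [DecidableEq n]
    (Z : Matrix n m R) (D : Matrix m m R) (hZ : Zᵀ * Z = 1) (hD : Dᵀ = D) :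
    (1 - Z * D * Zᵀ)ᵀ * (1 - Z * D * Zᵀ) = 1 + Z * (D * D - (2 : R) • D) * Zᵀ := by
  have hsq : Z * D * Zᵀ * (Z * D * Zᵀ) = Z * (D * D) * Zᵀ := by
    simp only [← Matrix.mul_assoc]
    rw [Matrix.mul_assoc (Z * D) Zᵀ Z, hZ, Matrix.mul_one]
  rw [transpose_sub, transpose_one, transpose_mul, transpose_mul, transpose_transpose, hD,
    ← Matrix.mul_assoc, sub_mul, one_mul, mul_sub, mul_one, hsq, Matrix.mul_sub, Matrix.sub_mul,
    Matrix.mul_smul, Matrix.smul_mul, two_smul]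
  abel

end

theorem prior_norm_without_Qinv_general
    {n k : ℕ}
    (Q : Matrix (Fin n) (Fin n) ℝ)
    (S : Matrix (Fin n) (Fin n) ℝ) (hS : S.PosDef) (hSQ : S * S = Q)
    (del : ℝ) (hdel : 0 < del)
    (V : Matrix (Fin n) (Fin k) ℝ) (hV : Vᵀ * Q * V = 1)
    (Z : Matrix (Fin n) (Fin k) ℝ) (hZ : Zᵀ * Z = 1)
    (d : Fin k → ℝ) (D : Matrix (Fin k) (Fin k) ℝ) (hD : D = Matrix.diagonal d)
    (z : Fin k → ℝ) (ξ : Fin n → ℝ) (x : Fin n → ℝ)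
    (hx : x = Q *ᵥ (V *ᵥ z) +
      (Real.sqrt del)⁻¹ • (S *ᵥ ((1 - Z * D * Zᵀ) *ᵥ ξ))) :
    x ⬝ᵥ (Q⁻¹ *ᵥ x)
      = z ⬝ᵥ z
        + 2 * (Real.sqrt del)⁻¹ * (z ⬝ᵥ (Vᵀ *ᵥ (S *ᵥ ((1 - Z * D * Zᵀ) *ᵥ ξ))))
        + del⁻¹ * (ξ ⬝ᵥ ((1 + Z * (D * D - (2 : ℝ) • D) * Zᵀ) *ᵥ ξ)) := by
  set M := 1 - Z * D * Zᵀ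
  have hSt : Sᵀ = S := hS.1
  have hQ : Q = S * Sᵀ := by rw [hSt, hSQ]
  have hxS : x = S *ᵥ (S *ᵥ (V *ᵥ z) + (Real.sqrt del)⁻¹ • (M *ᵥ ξ)) := by
    rw [hx, ← hSQ, mulVec_add, mulVec_smul, mulVec_mulVec _ S S]
  have hSVz : (S *ᵥ (V *ᵥ z)) ⬝ᵥ (S *ᵥ (V *ᵥ z)) = z ⬝ᵥ z := by
    rw [mulVec_mulVec, mulVec_dotProduct_mulVec, transpose_mul, hSt, Matrix.mul_assoc,
      ← Matrix.mul_assoc S, hSQ, ← Matrix.mul_assoc, hV, one_mulVec]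
  have hcross : (S *ᵥ (V *ᵥ z)) ⬝ᵥ (M *ᵥ ξ) = z ⬝ᵥ (Vᵀ *ᵥ (S *ᵥ (M *ᵥ ξ))) := by
    rw [mulVec_mulVec, mulVec_dotProduct_mulVec, transpose_mul, hSt, ← mulVec_mulVec,
      ← mulVec_mulVec]
  have hMξ : (M *ᵥ ξ) ⬝ᵥ (M *ᵥ ξ) = ξ ⬝ᵥ ((1 + Z * (D * D - (2 : ℝ) • D) * Zᵀ) *ᵥ ξ) := by
    rw [mulVec_dotProduct_mulVec, transpose_mul_self_one_sub_mul_mul_transpose Z D hZ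
      (by rw [hD, diagonal_transpose])]
  have hsqrt : (Real.sqrt del)⁻¹ * (Real.sqrt del)⁻¹ = del⁻¹ := by
    rw [← mul_inv, Real.mul_self_sqrt hdel.le]
  rw [hxS, hQ, mulVec_dotProduct_inv_mul_transpose_mulVec S hS.isUnit,
    add_smul_dotProduct_add_smul_self, hSVz, hcross, hMξ, hsqrt]

/-- evaluating the prior norm of x = QVz + δ^{−1/2}Q^{1/2}(I − ZDZᵀ)ξ
without applying Q⁻¹:
xᵀQ⁻¹x = zᵀz + 2δ^{−1/2} zᵀVᵀQ^{1/2}(I − ZDZᵀ)ξ + δ⁻¹ξᵀ(I + Z(D² − 2D)Zᵀ)ξ. -/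
theorem prior_norm_without_Qinv
    {n k : ℕ} (hk1 : 1 ≤ k) (hkn : k ≤ n)
    (Q : Matrix (Fin n) (Fin n) ℝ) (hQ : Q.PosDef)
    (S : Matrix (Fin n) (Fin n) ℝ) (hS : S.PosDef) (hSQ : S * S = Q)
    (del : ℝ) (hdel : 0 < del)
    (V : Matrix (Fin n) (Fin k) ℝ) (hV : Vᵀ * Q * V = 1)
    (Z : Matrix (Fin n) (Fin k) ℝ) (hZ : Zᵀ * Z = 1)
    (d : Fin k → ℝ) (D : Matrix (Fin k) (Fin k) ℝ) (hD : D = Matrix.diagonal d)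
    (z : Fin k → ℝ) (ξ : Fin n → ℝ) (x : Fin n → ℝ)
    (hx : x = Q *ᵥ (V *ᵥ z) +
      (Real.sqrt del)⁻¹ • (S *ᵥ ((1 - Z * D * Zᵀ) *ᵥ ξ))) :
    x ⬝ᵥ (Q⁻¹ *ᵥ x)
      = z ⬝ᵥ z
        + 2 * (Real.sqrt del)⁻¹ * (z ⬝ᵥ (Vᵀ *ᵥ (S *ᵥ ((1 - Z * D * Zᵀ) *ᵥ ξ))))
        + del⁻¹ * (ξ ⬝ᵥ ((1 + Z * (D * D - (2 : ℝ) • D) * Zᵀ) *ᵥ ξ)) :=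
  prior_norm_without_Qinv_general Q S hS hSQ del hdel V hV Z hZ d D hD z ξ x hx
end

section
/- Assume AQV_k = U_{k+1}B_k and AᵀR⁻¹U_{k+1} = V_k B_kᵀ + α_{k+1} v_{k+1} e_{k+1}ᵀ, where B_k ∈ ℝ^{(k+1)×k} is lower bidiagonal with diagonal entries α₁,…,α_k and subdiagonal entries γ₂,…,γ_{k+1}, and assume b = γ₁ u₁ with u₁ = U_{k+1}e₁ and AᵀR⁻¹u₁ = α₁ v₁ where v₁ is the first column of V_k. Then for every z ∈ ℝ^k: AᵀR⁻¹(b − A Q V_k z) = γ₁α₁ v₁ − V_k B_kᵀ B_k z − α_{k+1} γ_{k+1} (e_kᵀ z) v_{k+1}; equivalently, the residual quantity in the acceptance ratio can be computed using only the genGK matrices, with V_{k+1}[B_kᵀ; α_{k+1}e_{k+1}ᵀ]B_k z = V_k B_kᵀB_k z + α_{k+1}γ_{k+1}(e_kᵀz) v_{k+1}. -/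
open Matrix

/-- the residual quantity in the acceptance ratio can be computed using
only the genGK quantities: AᵀR⁻¹(b − AQV_kz) = γ₁α₁v₁ − V_kB_kᵀB_kz − α_{k+1}γ_{k+1}(e_kᵀz)v_{k+1},
and V_{k+1}[B_kᵀ; α_{k+1}e_{k+1}ᵀ]B_kz = V_kB_kᵀB_kz + α_{k+1}γ_{k+1}(e_kᵀz)v_{k+1}.
(`a j` is α_j, `c j` is γ_j, 1-based.) -/
theorem genGK_residual_identity
    {m n k : ℕ} (hk : 0 < k)
    (A : Matrix (Fin m) (Fin n) ℝ) (R : Matrix (Fin m) (Fin m) ℝ)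
    (Q : Matrix (Fin n) (Fin n) ℝ) (hR : R.PosDef) (hQ : Q.PosDef)
    (b : Fin m → ℝ)
    (U : Matrix (Fin m) (Fin (k + 1)) ℝ) (V : Matrix (Fin n) (Fin k) ℝ)
    (vk1 : Fin n → ℝ) (a c : ℕ → ℝ)
    (B : Matrix (Fin (k + 1)) (Fin k) ℝ)
    (hB : B = Matrix.of fun (i : Fin (k + 1)) (j : Fin k) =>
      if (i : ℕ) = (j : ℕ) then a ((j : ℕ) + 1)
      else if (i : ℕ) = (j : ℕ) + 1 then c ((j : ℕ) + 2) else 0)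
    (hAQV : A * Q * V = U * B)
    (hATRU : Aᵀ * R⁻¹ * U = V * Bᵀ +
      a (k + 1) • vecMulVec vk1 (Pi.single (Fin.last k) 1 : Fin (k + 1) → ℝ))
    (hb : b = c 1 • (U *ᵥ (Pi.single 0 1 : Fin (k + 1) → ℝ)))
    (hv1 : Aᵀ *ᵥ (R⁻¹ *ᵥ (U *ᵥ (Pi.single 0 1 : Fin (k + 1) → ℝ)))
      = a 1 • (fun i => V i ⟨0, hk⟩)) :
    ∀ z : Fin k → ℝ,
      (Aᵀ *ᵥ (R⁻¹ *ᵥ (b - A *ᵥ (Q *ᵥ (V *ᵥ z))))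
        = (c 1 * a 1) • (fun i => V i ⟨0, hk⟩)
          - V *ᵥ ((Bᵀ * B) *ᵥ z)
          - (a (k + 1) * c (k + 1) * z ⟨k - 1, by omega⟩) • vk1) ∧
      ((Matrix.of fun (i : Fin n) (j : Fin (k + 1)) =>
          if h : (j : ℕ) < k then V i ⟨j, h⟩ else vk1 i) *ᵥ
        ((Matrix.of fun (i : Fin (k + 1)) (j : Fin (k + 1)) =>
          if h : (i : ℕ) < k then B j ⟨i, h⟩
          else a (k + 1) * (if j = Fin.last k then 1 else 0)) *ᵥ (B *ᵥ z))
        = V *ᵥ (Bᵀ *ᵥ (B *ᵥ z))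
          + (a (k + 1) * c (k + 1) * z ⟨k - 1, by omega⟩) • vk1) := by
  intro z
  have hklt : k - 1 < k := by omega
  -- (B *ᵥ z) at the last index
  have hBz : (B *ᵥ z) (Fin.last k) = c (k + 1) * z ⟨k - 1, hklt⟩ := by
    subst hB
    simp only [mulVec, dotProduct, of_apply, Fin.val_last]
    rw [Finset.sum_eq_single (⟨k - 1, hklt⟩ : Fin k)]
    · simp only [Fin.val_mk]
      rw [if_neg (by omega), if_pos (by omega), show k - 1 + 2 = k + 1 by omega]
    · intro j _ hj
      have hjne : (j : ℕ) ≠ k - 1 := fun h => hj (Fin.ext (by simp [h]))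
      rw [if_neg (by omega), if_neg (by omega), zero_mul]
    · intro h
      exact absurd (Finset.mem_univ _) h
  -- action of the RHS matrix of hATRU on a vector
  have key : ∀ (P : Matrix (Fin n) (Fin (k + 1)) ℝ),
      P = V * Bᵀ + a (k + 1) • vecMulVec vk1 (Pi.single (Fin.last k) 1 : Fin (k + 1) → ℝ) →
      ∀ w : Fin (k + 1) → ℝ,
      P *ᵥ w = V *ᵥ (Bᵀ *ᵥ w) + (a (k + 1) * w (Fin.last k)) • vk1 := by
    intro P hP w
    subst hP
    rw [add_mulVec, smul_mulVec, mulVec_mulVec]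
    congr 1
    ext i
    simp only [mulVec, dotProduct, vecMulVec_apply, Pi.smul_apply, smul_eq_mul]
    rw [Finset.sum_eq_single (Fin.last k)]
    · simp [Pi.single_apply]; ring
    · intro j _ hj
      simp [Pi.single_apply, hj]
    · intro h
      exact absurd (Finset.mem_univ _) h
  have h2 : Aᵀ *ᵥ (R⁻¹ *ᵥ (U *ᵥ (B *ᵥ z)))
      = V *ᵥ (Bᵀ *ᵥ (B *ᵥ z)) + (a (k + 1) * c (k + 1) * z ⟨k - 1, hklt⟩) • vk1 := by
    rw [mulVec_mulVec, mulVec_mulVec, key _ hATRU, hBz, mul_assoc]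
  constructor
  · have h1 : A *ᵥ (Q *ᵥ (V *ᵥ z)) = U *ᵥ (B *ᵥ z) := by
      rw [mulVec_mulVec, mulVec_mulVec, hAQV, ← mulVec_mulVec]
    rw [mulVec_sub, mulVec_sub, h1, hb, mulVec_smul, mulVec_smul, hv1, h2,
      smul_smul, sub_add_eq_sub_sub, ← mulVec_mulVec]
  · rw [mulVec_mulVec]
    have hWM : (Matrix.of fun (i : Fin n) (j : Fin (k + 1)) =>
          if h : (j : ℕ) < k then V i ⟨j, h⟩ else vk1 i) *
        (Matrix.of fun (i : Fin (k + 1)) (j : Fin (k + 1)) =>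
          if h : (i : ℕ) < k then B j ⟨i, h⟩
          else a (k + 1) * (if j = Fin.last k then 1 else 0))
        = V * Bᵀ + a (k + 1) • vecMulVec vk1 (Pi.single (Fin.last k) 1 : Fin (k + 1) → ℝ) := by
      ext i j
      simp only [mul_apply, of_apply, Matrix.add_apply, Pi.smul_apply, Matrix.smul_apply,
        vecMulVec_apply, transpose_apply, smul_eq_mul]
      rw [Fin.sum_univ_castSucc]
      have hlast : ¬ ((Fin.last k : Fin (k + 1)) : ℕ) < k := by simp
      rw [dif_neg hlast, dif_neg hlast]
      congr 1
      · apply Finset.sum_congr rfl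
        intro l _
        have hl : ((l.castSucc : Fin (k + 1)) : ℕ) < k := by
          simp [Fin.coe_castSucc]
        rw [dif_pos hl, dif_pos hl]
        simp only [Fin.coe_castSucc, Fin.eta]
      · simp [Pi.single_apply]
        ring
    rw [hWM, key _ rfl, hBz, mul_assoc]
end

section
/- Let F = (δ/λ) Q + Q AᵀR⁻¹A Q, let G ∈ ℝ^{n×n} be invertible, and let (GFGᵀ)^{−1/2} denote the unique symmetric positive definite square root of (GFGᵀ)⁻¹. Then S_F = λ^{−1/2} Q Gᵀ (GFGᵀ)^{−1/2} satisfies S_F S_Fᵀ = (δ Q⁻¹ + λ AᵀR⁻¹A)⁻¹; i.e., S_F is an exact square-root factor of the conditional covariance Γ_cond, for any choice of invertible preconditioner G. -/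
open Matrix

lemma posDef_smul_aux {n : ℕ} {c : ℝ} (hc : 0 < c) {M : Matrix (Fin n) (Fin n) ℝ}
    (hM : M.PosDef) : (c • M).PosDef := by
  refine ⟨?_, fun x hx => ?_⟩
  · have := hM.1
    simpa [Matrix.IsHermitian] using congrArg (c • ·) this
  · simpa [Finsupp.mul_sum, mul_assoc, mul_left_comm] using smul_pos hc (hM.2 hx)

/-- for any invertible preconditioner G, with F = (δ/λ)Q + QAᵀR⁻¹AQ and
W the unique SPD square root of (GFGᵀ)⁻¹, the matrix S_F = λ^{−1/2}QGᵀW is an exact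
square-root factor of the conditional covariance: S_FS_Fᵀ = (δQ⁻¹ + λAᵀR⁻¹A)⁻¹. -/
theorem preconditioned_cov_sqrt_factor
    {m n : ℕ}
    (A : Matrix (Fin m) (Fin n) ℝ) (R : Matrix (Fin m) (Fin m) ℝ)
    (Q : Matrix (Fin n) (Fin n) ℝ) (hR : R.PosDef) (hQ : Q.PosDef)
    (lam del : ℝ) (hlam : 0 < lam) (hdel : 0 < del)
    (F : Matrix (Fin n) (Fin n) ℝ)
    (hF : F = (del / lam) • Q + Q * Aᵀ * R⁻¹ * A * Q)
    (G : Matrix (Fin n) (Fin n) ℝ) (hG : IsUnit G)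
    (W : Matrix (Fin n) (Fin n) ℝ) (hW : W.PosDef)
    (hWsq : W * W = (G * F * Gᵀ)⁻¹)
    (SF : Matrix (Fin n) (Fin n) ℝ)
    (hSF : SF = (Real.sqrt lam)⁻¹ • (Q * Gᵀ * W)) :
    SF * SFᵀ = (del • Q⁻¹ + lam • (Aᵀ * R⁻¹ * A))⁻¹ := by
  have hQs : Qᵀ = Q := by simpa using hQ.1.eq
  have hWs : Wᵀ = W := by simpa using hW.1.eq
  -- F is positive definite
  have hherm : ∀ (p q : ℕ) (X : Matrix (Fin p) (Fin q) ℝ), Xᴴ = Xᵀ := by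
    intro p q X; ext i j; simp [conjTranspose_apply]
  have hconj : (Q * Aᵀ * R⁻¹ * A * Q).PosSemidef := by
    have h1 : ((Q * Aᵀ) * R⁻¹ * (Q * Aᵀ)ᴴ).PosSemidef :=
      hR.inv.posSemidef.mul_mul_conjTranspose_same (Q * Aᵀ)
    have h2 : (Q * Aᵀ)ᴴ = A * Q := by
      rw [hherm, Matrix.transpose_mul, Matrix.transpose_transpose, hQs]
    rw [h2] at h1
    simpa [Matrix.mul_assoc] using h1
  have hFpd : F.PosDef := by
    rw [hF]
    exact (posDef_smul_aux (div_pos hdel hlam) hQ).add_posSemidef hconj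
  have hQd : IsUnit Q.det := (Matrix.isUnit_iff_isUnit_det Q).mp hQ.isUnit
  have hQinv : Q⁻¹ * Q = 1 := Matrix.nonsing_inv_mul _ ((Matrix.isUnit_iff_isUnit_det Q).mp hQ.isUnit)
  have hQinv' : Q * Q⁻¹ = 1 := Matrix.mul_nonsing_inv _ ((Matrix.isUnit_iff_isUnit_det Q).mp hQ.isUnit)
  have hFd : IsUnit F.det := (Matrix.isUnit_iff_isUnit_det F).mp hFpd.isUnit
  have hGd : IsUnit G.det := (Matrix.isUnit_iff_isUnit_det G).mp hG
  have hGTd : IsUnit Gᵀ.det := by rwa [Matrix.det_transpose]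
  -- step 1: SF * SFᵀ = lam⁻¹ • (Q * F⁻¹ * Q)
  have hcoef : (Real.sqrt lam)⁻¹ * (Real.sqrt lam)⁻¹ = lam⁻¹ := by
    rw [← mul_inv, Real.mul_self_sqrt hlam.le]
  have key : SF * SFᵀ = lam⁻¹ • (Q * F⁻¹ * Q) := by
    rw [hSF, Matrix.transpose_smul, Matrix.smul_mul, Matrix.mul_smul, smul_smul, hcoef]
    congr 1
    have ht : (Q * Gᵀ * W)ᵀ = W * G * Q := by
      simp [Matrix.transpose_mul, hQs, hWs, Matrix.mul_assoc]
    rw [ht]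
    have : Q * Gᵀ * W * (W * G * Q) = Q * Gᵀ * (W * W) * G * Q := by
      noncomm_ring
    rw [this, hWsq, Matrix.mul_inv_rev, Matrix.mul_inv_rev]
    have e1 : Gᵀ * (Gᵀ⁻¹ * (F⁻¹ * G⁻¹)) = F⁻¹ * G⁻¹ := by
      rw [← Matrix.mul_assoc, Matrix.mul_nonsing_inv _ hGTd, Matrix.one_mul]
    calc Q * Gᵀ * (Gᵀ⁻¹ * (F⁻¹ * G⁻¹)) * G * Q 
        = Q * (Gᵀ * (Gᵀ⁻¹ * (F⁻¹ * G⁻¹))) * G * Q := by rw [Matrix.mul_assoc Q]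
      _ = Q * (F⁻¹ * G⁻¹) * G * Q := by rw [e1]
      _ = Q * F⁻¹ * (G⁻¹ * G) * Q := by noncomm_ring
      _ = Q * F⁻¹ * Q := by rw [Matrix.nonsing_inv_mul _ hGd, Matrix.mul_one]
  -- step 2: RHS matrix equals lam • (Q⁻¹ * F * Q⁻¹)
  have e2 : Q⁻¹ * (Q * Aᵀ * R⁻¹ * A * Q) * Q⁻¹ = Aᵀ * R⁻¹ * A := by
    simp only [Matrix.mul_assoc, hQinv']
    simp only [Matrix.mul_one]
    rw [← Matrix.mul_assoc, hQinv, Matrix.one_mul]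
  have hM : del • Q⁻¹ + lam • (Aᵀ * R⁻¹ * A) = lam • (Q⁻¹ * F * Q⁻¹) := by
    rw [hF, Matrix.mul_add, Matrix.add_mul, e2, Matrix.mul_smul, Matrix.smul_mul,
      hQinv, Matrix.one_mul, smul_add, smul_smul, mul_div_cancel₀ _ hlam.ne']
  rw [key, hM]
  symm
  apply Matrix.inv_eq_right_inv
  rw [Matrix.smul_mul, Matrix.mul_smul, smul_smul, mul_inv_cancel₀ hlam.ne', one_smul]
  have e3 : Q⁻¹ * F * Q⁻¹ * (Q * F⁻¹ * Q) = Q⁻¹ * (F * (Q⁻¹ * Q) * F⁻¹) * Q := by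
    noncomm_ring
  rw [e3, hQinv, Matrix.mul_one, Matrix.mul_nonsing_inv _ hFd, Matrix.mul_one, hQinv]
end

section
/- Let Γ⁻¹ = λ AᵀR⁻¹A + δ Q⁻¹, x_cond = λ Γ AᵀR⁻¹b, and x_k = Q V_k z_k. Define h(x) = exp(−½(x − x_cond)ᵀΓ⁻¹(x − x_cond)) and g₂(x) = exp(−½(x − x_k)ᵀΓ⁻¹(x − x_k)). Then for all x, y ∈ ℝⁿ, the acceptance ratio of the preconditioned-Lanczos proposal satisfies (h(y) g₂(x)) / (h(x) g₂(y)) = exp((y − x)ᵀ(λ AᵀR⁻¹(b − A Q V_k z_k) − δ V_k z_k)). -/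
open Matrix

/-- acceptance ratio of the preconditioned-Lanczos proposal: with
Γ⁻¹ = λAᵀR⁻¹A + δQ⁻¹, x_cond = λΓAᵀR⁻¹b, x_k = QV_kz_k, and Gaussian densities
h and g₂ with covariance Γ centered at x_cond and x_k respectively,
(h(y)g₂(x))/(h(x)g₂(y)) = exp((y − x)ᵀ(λAᵀR⁻¹(b − AQV_kz_k) − δV_kz_k)). -/
theorem preconditioned_lanczos_acceptance_ratio
    {m n k : ℕ} (hk : 1 ≤ k)
    (A : Matrix (Fin m) (Fin n) ℝ) (R : Matrix (Fin m) (Fin m) ℝ)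
    (Q : Matrix (Fin n) (Fin n) ℝ) (hR : R.PosDef) (hQ : Q.PosDef)
    (lam del : ℝ) (hlam : 0 < lam) (hdel : 0 < del)
    (b : Fin m → ℝ)
    (Γinv : Matrix (Fin n) (Fin n) ℝ)
    (hΓinv : Γinv = lam • (Aᵀ * R⁻¹ * A) + del • Q⁻¹)
    (hΓinvPD : Γinv.PosDef)
    (V : Matrix (Fin n) (Fin k) ℝ) (z : Fin k → ℝ)
    (xcond : Fin n → ℝ) (hxcond : xcond = lam • (Γinv⁻¹ *ᵥ (Aᵀ *ᵥ (R⁻¹ *ᵥ b))))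
    (xk : Fin n → ℝ) (hxk : xk = Q *ᵥ (V *ᵥ z))
    (h g₂ : (Fin n → ℝ) → ℝ)
    (hh : ∀ x, h x = Real.exp (-(1 / 2) * ((x - xcond) ⬝ᵥ (Γinv *ᵥ (x - xcond)))))
    (hg : ∀ x, g₂ x = Real.exp (-(1 / 2) * ((x - xk) ⬝ᵥ (Γinv *ᵥ (x - xk))))) :
    ∀ x y : Fin n → ℝ,
      (h y * g₂ x) / (h x * g₂ y)
        = Real.exp ((y - x) ⬝ᵥ
            (lam • (Aᵀ *ᵥ (R⁻¹ *ᵥ (b - A *ᵥ (Q *ᵥ (V *ᵥ z))))) - del • (V *ᵥ z))) := by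
  intro x y
  have hQdet : IsUnit Q.det := isUnit_iff_ne_zero.mpr hQ.det_pos.ne'
  have hΓdet : IsUnit Γinv.det := isUnit_iff_ne_zero.mpr hΓinvPD.det_pos.ne'
  have hsym : Γinvᵀ = Γinv := by
    have := hΓinvPD.isHermitian
    exact (by simpa using this : Γinv.IsSymm)
  have sym : ∀ u v : Fin n → ℝ, u ⬝ᵥ (Γinv *ᵥ v) = v ⬝ᵥ (Γinv *ᵥ u) := by
    intro u v
    rw [dotProduct_mulVec, ← mulVec_transpose, hsym, dotProduct_comm]
  have hGxc : Γinv *ᵥ xcond = lam • (Aᵀ *ᵥ (R⁻¹ *ᵥ b)) := by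
    rw [hxcond, mulVec_smul, mulVec_mulVec, Matrix.mul_nonsing_inv _ hΓdet, one_mulVec]
  have hGxk : Γinv *ᵥ xk = lam • (Aᵀ *ᵥ (R⁻¹ *ᵥ (A *ᵥ (Q *ᵥ (V *ᵥ z))))) + del • (V *ᵥ z) := by
    have e1 : Q⁻¹ *ᵥ (Q *ᵥ (V *ᵥ z)) = V *ᵥ z := by
      rw [mulVec_mulVec, Matrix.nonsing_inv_mul _ hQdet, one_mulVec]
    have e2 : (Aᵀ * R⁻¹ * A) *ᵥ (Q *ᵥ (V *ᵥ z)) = Aᵀ *ᵥ (R⁻¹ *ᵥ (A *ᵥ (Q *ᵥ (V *ᵥ z)))) := by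
      rw [← mulVec_mulVec, ← mulVec_mulVec]
    rw [hxk, hΓinv, add_mulVec, smul_mulVec, smul_mulVec, e1, e2]
  have hvec : lam • (Aᵀ *ᵥ (R⁻¹ *ᵥ (b - A *ᵥ (Q *ᵥ (V *ᵥ z))))) - del • (V *ᵥ z)
      = Γinv *ᵥ (xcond - xk) := by
    rw [Matrix.mulVec_sub Γinv xcond xk, hGxc, hGxk]
    simp only [mulVec_sub, smul_sub]
    module
  rw [hh, hh, hg, hg, ← Real.exp_add, ← Real.exp_add, ← Real.exp_sub]
  congr 1
  rw [hvec]
  simp only [mulVec_sub, dotProduct_sub, sub_dotProduct]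
  linear_combination (1/2) * (sym xcond y) + (1/2) * (sym xk x)
    + (1/2) * (sym x xcond) + (1/2) * (sym y xk)
end
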